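/- arXiv:1709.01911 — 3 statements merged into one kernel-verified Lean document; each statement's English description precedes it below -/
import Mathlib

section
/- Let X be a barrelled locally convex topological vector space over ℝ, let Y be a locally convex topological vector space over ℝ, let η : [c,d] → X be a continuous map on a closed interval, and let (L_m)_{m ∈ [a,b]} be a family of continuous linear maps L_m : X → Y indexed by a closed interval such that for every x ∈ X the map m ↦ L_m x is continuous on [a,b]. Then the map (m, m') ↦ L_m(η(m')) is continuous on [a,b] × [c,d]. -/
/-!
By Banach–Steinhaus, the family `(L m)_{m ∈ [a,b]}` is equicontinuous: it is pointwise bounded,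
since `m ↦ L m x` is continuous on a compact interval. An equicontinuous family that is
continuous in its index at each point is jointly continuous in the index and the argument,
and composing with `(m, m') ↦ (m, η m')` gives the claim.
-/

open Filter Set Topology Uniformity

theorem continuousWithinAt_prod_univ_of_equicontinuousAt {ι X α : Type*} [TopologicalSpace ι]
    [TopologicalSpace X] [UniformSpace α] {F : ι → X → α} {s : Set ι} {i₀ : ι} {x₀ : X}
    (hF : EquicontinuousAt (fun i : s => F i) x₀)
    (hc : ContinuousWithinAt (fun i => F i x₀) s i₀) :
    ContinuousWithinAt (fun p : ι × X => F p.1 p.2) (s ×ˢ univ) (i₀, x₀) := by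
  rw [ContinuousWithinAt, Uniform.tendsto_nhds_right, nhdsWithin_prod_eq, nhdsWithin_univ]
  intro U hU
  obtain ⟨V, hV, hVU⟩ := comp_mem_uniformity_sets hU
  have hnear : ∀ᶠ i in 𝓝[s] i₀, i ∈ s ∧ (F i₀ x₀, F i x₀) ∈ V :=
    eventually_mem_nhdsWithin.and (Uniform.tendsto_nhds_right.mp hc hV)
  exact (hnear.prod_mk (hF V hV)).mono fun ⟨i, _⟩ ⟨⟨hi, h₁⟩, h₂⟩ =>
    hVU (SetRel.prodMk_mem_comp h₁ (h₂ ⟨i, hi⟩))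

theorem IsCompact.equicontinuous_of_continuousOn {𝕜 ι X Y : Type*} [NontriviallyNormedField 𝕜]
    [TopologicalSpace ι]
    [AddCommGroup X] [Module 𝕜 X] [TopologicalSpace X] [IsTopologicalAddGroup X]
    [ContinuousSMul 𝕜 X] [BarrelledSpace 𝕜 X]
    [AddCommGroup Y] [Module 𝕜 Y] [UniformSpace Y] [IsUniformAddGroup Y]
    [ContinuousSMul 𝕜 Y] [PolynormableSpace 𝕜 Y]
    {s : Set ι} (hs : IsCompact s) {L : ι → X →L[𝕜] Y}
    (hL : ∀ x, ContinuousOn (fun i => L i x) s) :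
    Equicontinuous (fun i : s => (L i : X → Y)) := by
  let _ := IsTopologicalAddGroup.rightUniformSpace X
  have := isUniformAddGroup_of_addCommGroup (G := X)
  refine (PolynormableSpace.banach_steinhaus (𝓕 := fun i : s => L i) fun x => ?_).equicontinuous
  rw [← image_eq_range (fun i => L i x)]
  exact (hs.image_of_continuousOn (hL x)).isVonNBounded 𝕜

theorem joint_continuity_of_barrelled_general
    {X Y : Type*}
    [AddCommGroup X] [Module ℝ X] [TopologicalSpace X]
    [IsTopologicalAddGroup X] [ContinuousSMul ℝ X]
    [BarrelledSpace ℝ X]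
    [AddCommGroup Y] [Module ℝ Y] [TopologicalSpace Y]
    [IsTopologicalAddGroup Y] [ContinuousSMul ℝ Y] [LocallyConvexSpace ℝ Y]
    (a b c d : ℝ)
    (η : ℝ → X) (hη : ContinuousOn η (Set.Icc c d))
    (L : ℝ → X →L[ℝ] Y)
    (hL : ∀ x : X, ContinuousOn (fun m => L m x) (Set.Icc a b)) :
    ContinuousOn (fun p : ℝ × ℝ => L p.1 (η p.2)) (Set.Icc a b ×ˢ Set.Icc c d) := by
  let _ := IsTopologicalAddGroup.rightUniformSpace Y
  have := isUniformAddGroup_of_addCommGroup (G := Y)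
  have hequi := isCompact_Icc.equicontinuous_of_continuousOn (𝕜 := ℝ) hL
  have hjoint : ContinuousOn (fun p : ℝ × X => L p.1 p.2) (Icc a b ×ˢ univ) :=
    fun ⟨m, x⟩ ⟨hm, _⟩ => continuousWithinAt_prod_univ_of_equicontinuousAt (hequi x) (hL x m hm)
  exact hjoint.comp (continuousOn_fst.prodMk (hη.comp continuousOn_snd fun _ hp => hp.2))
    fun _ hp => ⟨hp.1, trivial⟩

/-- **Joint continuity lemma.**
Let `X` be a barrelled locally convex topological vector space over `ℝ`, `Y` a locally
convex topological vector space over `ℝ`, `η : [c,d] → X` a continuous map on a closed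
interval, and `(L m)_{m ∈ [a,b]}` a family of continuous linear maps `X → Y` such that
`m ↦ L m x` is continuous on `[a,b]` for every `x ∈ X`.  Then `(m, m') ↦ L m (η m')`
is continuous on `[a,b] × [c,d]`. -/
theorem joint_continuity_of_barrelled
    {X Y : Type*}
    [AddCommGroup X] [Module ℝ X] [TopologicalSpace X]
    [IsTopologicalAddGroup X] [ContinuousSMul ℝ X]
    [LocallyConvexSpace ℝ X] [BarrelledSpace ℝ X]
    [AddCommGroup Y] [Module ℝ Y] [TopologicalSpace Y]
    [IsTopologicalAddGroup Y] [ContinuousSMul ℝ Y] [LocallyConvexSpace ℝ Y]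
    (a b c d : ℝ)
    (η : ℝ → X) (hη : ContinuousOn η (Set.Icc c d))
    (L : ℝ → X →L[ℝ] Y)
    (hL : ∀ x : X, ContinuousOn (fun m => L m x) (Set.Icc a b)) :
    ContinuousOn (fun p : ℝ × ℝ => L p.1 (η p.2)) (Set.Icc a b ×ˢ Set.Icc c d) :=
  joint_continuity_of_barrelled_general a b c d η hη L hL
end

section
/- Let 𝕜 be a field, let V and W be vector spaces over 𝕜, and let f : V → W be a 𝕜-linear map. Then the kernel of the induced algebra homomorphism T(f) : T(V) → T(W) is exactly the two-sided ideal of T(V) generated by the set {ι(v) : v ∈ ker f}. -/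
/-
Over a field `f` has a generalized inverse `g` (`f ∘ g ∘ f = f`), and then `q = g ∘ f` satisfies
`v - q v ∈ ker f` for every `v`, so the two algebra homomorphisms `id` and `T(q)` agree on
generators modulo the ideal `I` spanned by `ι (ker f)`, hence agree modulo `I` everywhere.
Since `T(q) = T(g) ∘ T(f)` kills `ker T(f)`, every `x ∈ ker T(f)` satisfies `x = x - T(q) x ∈ I`.
-/

/-- The algebra homomorphism `T(f) : T(V) → T(W)` on tensor algebras induced by a linear
map `f : V → W`; it is the unique unital algebra homomorphism with `T(f)(ι v) = ι (f v)`. -/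
noncomputable def tensorAlgebraMap (𝕜 : Type*) {V W : Type*} [Field 𝕜]
    [AddCommGroup V] [Module 𝕜 V] [AddCommGroup W] [Module 𝕜 W] (f : V →ₗ[𝕜] W) :
    TensorAlgebra 𝕜 V →ₐ[𝕜] TensorAlgebra 𝕜 W :=
  TensorAlgebra.lift 𝕜 ((TensorAlgebra.ι 𝕜).comp f)

theorem LinearMap.exists_comp_comp_eq_self {K V W : Type*} [DivisionRing K]
    [AddCommGroup V] [Module K V] [AddCommGroup W] [Module K W] (f : V →ₗ[K] W) :
    ∃ g : W →ₗ[K] V, f ∘ₗ g ∘ₗ f = f := by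
  obtain ⟨s, hs⟩ := f.rangeRestrict.exists_rightInverse_of_surjective f.range_rangeRestrict
  obtain ⟨g, hg⟩ := LinearMap.exists_extend s
  refine ⟨g, LinearMap.ext fun v => ?_⟩
  have hgf : g (f v) = s (f.rangeRestrict v) := congr($hg (f.rangeRestrict v))
  simpa [hgf] using congr(((f.range).subtype ($hs (f.rangeRestrict v))))

theorem TensorAlgebra.sub_mem_of_forall_ι {R M A : Type*} [CommSemiring R] [AddCommMonoid M]
    [Module R M] [Ring A] [Algebra R A] (I : TwoSidedIdeal A) (φ ψ : TensorAlgebra R M →ₐ[R] A)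
    (h : ∀ m, φ (ι R m) - ψ (ι R m) ∈ I) (x : TensorAlgebra R M) : φ x - ψ x ∈ I := by
  induction x using TensorAlgebra.induction with
  | algebraMap r => simp
  | ι m => exact h m
  | mul a b ha hb =>
    have hsplit : φ (a * b) - ψ (a * b) = (φ a - ψ a) * φ b + ψ a * (φ b - ψ b) := by
      simp only [map_mul]; noncomm_ring
    rw [hsplit]
    exact I.add_mem (I.mul_mem_right _ _ ha) (I.mul_mem_left _ _ hb)
  | add a b ha hb =>
    rw [map_add, map_add, add_sub_add_comm]
    exact I.add_mem ha hb

section tensorAlgebraMap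

variable {𝕜 V W U : Type*} [Field 𝕜] [AddCommGroup V] [Module 𝕜 V] [AddCommGroup W]
  [Module 𝕜 W] [AddCommGroup U] [Module 𝕜 U]

@[simp]
theorem tensorAlgebraMap_ι (f : V →ₗ[𝕜] W) (v : V) :
    tensorAlgebraMap 𝕜 f (TensorAlgebra.ι 𝕜 v) = TensorAlgebra.ι 𝕜 (f v) := by
  simp [tensorAlgebraMap]

theorem tensorAlgebraMap_comp (f : V →ₗ[𝕜] W) (g : W →ₗ[𝕜] U) :
    tensorAlgebraMap 𝕜 (g ∘ₗ f) = (tensorAlgebraMap 𝕜 g).comp (tensorAlgebraMap 𝕜 f) :=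
  TensorAlgebra.hom_ext (LinearMap.ext fun v => by simp)

end tensorAlgebraMap

/-- **Kernel of the induced map on tensor algebras.**
For a field `𝕜`, vector spaces `V`, `W` over `𝕜` and a `𝕜`-linear map `f : V → W`,
the kernel of the induced algebra homomorphism `T(f) : T(V) → T(W)` is exactly the
two-sided ideal of `T(V)` generated by `{ι v : v ∈ ker f}`. -/
theorem ker_tensorAlgebraMap_eq_span (𝕜 : Type*) {V W : Type*} [Field 𝕜]
    [AddCommGroup V] [Module 𝕜 V] [AddCommGroup W] [Module 𝕜 W] (f : V →ₗ[𝕜] W) :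
    ∀ x : TensorAlgebra 𝕜 V,
      tensorAlgebraMap 𝕜 f x = 0 ↔
        x ∈ TwoSidedIdeal.span
          (⇑(TensorAlgebra.ι 𝕜) '' (LinearMap.ker f : Set V)) := by
  set I := TwoSidedIdeal.span (⇑(TensorAlgebra.ι 𝕜) '' (LinearMap.ker f : Set V))
  intro x
  constructor
  · intro hx
    obtain ⟨g, hg⟩ := f.exists_comp_comp_eq_self
    have hgen (v : V) :
        TensorAlgebra.ι 𝕜 v - tensorAlgebraMap 𝕜 (g ∘ₗ f) (TensorAlgebra.ι 𝕜 v) ∈ I :=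
      TwoSidedIdeal.subset_span
        ⟨v - g (f v), by simpa [sub_eq_zero] using congr($hg v).symm, by simp⟩
    simpa [tensorAlgebraMap_comp, hx] using
      TensorAlgebra.sub_mem_of_forall_ι I (AlgHom.id 𝕜 _) _ hgen x
  · intro hx
    have hIker : I ≤ TwoSidedIdeal.ker (tensorAlgebraMap 𝕜 f) := by
      rw [TwoSidedIdeal.span_le]
      rintro _ ⟨v, hv, rfl⟩
      simp [TwoSidedIdeal.mem_ker, LinearMap.mem_ker.1 hv]
    exact (TwoSidedIdeal.mem_ker _).1 (hIker hx)
end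

section
/- Let V be a vector space over ℂ, let G : V × V → ℂ be a bilinear form, let D : V → V be a linear map, let λ : V → ℂ be a linear functional, and set μ := λ ∘ D. Let Γ_λ : T(V) → T(V) be the unique unital algebra homomorphism with Γ_λ(ι v) = ι v − λ(v)·1 for all v ∈ V. Then: (i) Γ_λ is an algebra automorphism, with inverse the analogous map Γ_{−λ}; (ii) Γ_λ maps the two-sided ideal I₀ generated by {ι(Dv) : v ∈ V} together with the elements ι(v)ι(w) − ι(w)ι(v) − G(v,w)·1 (v,w ∈ V) onto the two-sided ideal I_μ generated by {ι(Dv) − μ(v)·1 : v ∈ V} together with the same elements ι(v)ι(w) − ι(w)ι(v) − G(v,w)·1; (iii) consequently Γ_λ descends to an algebra isomorphism T(V)/I₀ ≅ T(V)/I_μ. -/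
variable {V : Type*} [AddCommGroup V] [Module ℂ V]

/-- `Γ_λ : T(V) → T(V)`, the unique unital algebra homomorphism with
`Γ_λ (ι v) = ι v - λ(v)·1` for all `v ∈ V`. -/
noncomputable def Gamma (l : V →ₗ[ℂ] ℂ) : TensorAlgebra ℂ V →ₐ[ℂ] TensorAlgebra ℂ V :=
  TensorAlgebra.lift ℂ
    (TensorAlgebra.ι ℂ - (Algebra.linearMap ℂ (TensorAlgebra ℂ V)).comp l)

/-- The CCR generators `ι v * ι w - ι w * ι v - G(v,w)·1`, `v, w ∈ V`. -/
def ccrSet (G : V →ₗ[ℂ] V →ₗ[ℂ] ℂ) : Set (TensorAlgebra ℂ V) :=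
  {x | ∃ v w : V, x = TensorAlgebra.ι ℂ v * TensorAlgebra.ι ℂ w
    - TensorAlgebra.ι ℂ w * TensorAlgebra.ι ℂ v
    - algebraMap ℂ (TensorAlgebra ℂ V) (G v w)}

/-- The source-free dynamical generators `ι (D v)`, `v ∈ V`. -/
def dynSet (D : V →ₗ[ℂ] V) : Set (TensorAlgebra ℂ V) :=
  {x | ∃ v : V, x = TensorAlgebra.ι ℂ (D v)}

/-- The source-dependent dynamical generators `ι (D v) - μ(v)·1`, `v ∈ V`. -/
def srcSet (D : V →ₗ[ℂ] V) (μ : V →ₗ[ℂ] ℂ) : Set (TensorAlgebra ℂ V) :=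
  {x | ∃ v : V, x = TensorAlgebra.ι ℂ (D v) - algebraMap ℂ (TensorAlgebra ℂ V) (μ v)}

/-- The defining relation of the two-sided ideal `I₀` generated by `{ι (D v)}` and the
CCR elements; `RingQuot` of this relation is `T(V)/I₀`. -/
def relZero (G : V →ₗ[ℂ] V →ₗ[ℂ] ℂ) (D : V →ₗ[ℂ] V) :
    TensorAlgebra ℂ V → TensorAlgebra ℂ V → Prop :=
  fun a b => a - b ∈ dynSet D ∪ ccrSet G

/-- The defining relation of the two-sided ideal `I_μ` generated by `{ι (D v) - μ(v)·1}`
and the CCR elements; `RingQuot` of this relation is `T(V)/I_μ`. -/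
def relMu (G : V →ₗ[ℂ] V →ₗ[ℂ] ℂ) (D : V →ₗ[ℂ] V) (μ : V →ₗ[ℂ] ℂ) :
    TensorAlgebra ℂ V → TensorAlgebra ℂ V → Prop :=
  fun a b => a - b ∈ srcSet D μ ∪ ccrSet G

/-! `Γ_λ` is a translation of the generators by scalars. Such translations compose additively,
so `Γ_{-λ}` inverts `Γ_λ`, and they leave commutators of generators unchanged, so every CCR
generator is fixed. On the dynamical generators, `Γ_λ (ι (D v)) = ι (D v) - λ(D v)·1`, which is
exactly the source generator for `μ = λ ∘ D`. Hence the automorphism `Γ_λ` maps the generating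
set of `I₀` bijectively onto that of `I_μ`, so it maps `I₀` onto `I_μ` and descends to the
quotients. -/

namespace TwoSidedIdeal

variable {R S : Type*} [Ring R] [Ring S]

theorem image_span_of_ringEquiv (e : R ≃+* S) (s : Set R) :
    e '' (span s : Set R) = span (e '' s) := by
  ext x
  rw [e.image_eq_preimage_symm, Set.mem_preimage, SetLike.mem_coe]
  constructor
  · intro hx
    have hle : span s ≤ comap e (span (e '' s)) :=
      span_le.mpr fun y hy ↦ (mem_comap e).mpr (subset_span ⟨y, hy, rfl⟩)
    simpa using (mem_comap e).mp (hle hx)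
  · intro hx
    have hle : span (e '' s) ≤ comap e.symm (span s) :=
      span_le.mpr fun _ ⟨y, hy, hxy⟩ ↦ (mem_comap e.symm).mpr (by simpa [← hxy] using subset_span hy)
    exact (mem_comap e.symm).mp (hle hx)

end TwoSidedIdeal

@[simp]
theorem Gamma_ι (l : V →ₗ[ℂ] ℂ) (v : V) :
    Gamma l (TensorAlgebra.ι ℂ v)
      = TensorAlgebra.ι ℂ v - algebraMap ℂ (TensorAlgebra ℂ V) (l v) := by
  simp [Gamma]

theorem Gamma_comp_Gamma (l l' : V →ₗ[ℂ] ℂ) : (Gamma l).comp (Gamma l') = Gamma (l + l') := by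
  ext v
  simp [sub_sub]

theorem Gamma_zero : Gamma (0 : V →ₗ[ℂ] ℂ) = AlgHom.id ℂ _ := by
  ext v
  simp

noncomputable def gammaEquiv (l : V →ₗ[ℂ] ℂ) : TensorAlgebra ℂ V ≃ₐ[ℂ] TensorAlgebra ℂ V :=
  AlgEquiv.ofAlgHom (Gamma l) (Gamma (-l))
    (by rw [Gamma_comp_Gamma, add_neg_cancel, Gamma_zero])
    (by rw [Gamma_comp_Gamma, neg_add_cancel, Gamma_zero])

@[simp]
theorem coe_gammaEquiv (l : V →ₗ[ℂ] ℂ) : ⇑(gammaEquiv l) = Gamma l := rfl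

theorem commutator_sub_algebraMap {R A : Type*} [CommSemiring R] [Ring A] [Algebra R A]
    (x y : A) (r s : R) :
    (x - algebraMap R A r) * (y - algebraMap R A s) - (y - algebraMap R A s) * (x - algebraMap R A r)
      = x * y - y * x := by
  simp only [sub_mul, mul_sub, Algebra.commutes r y, Algebra.commutes s x,
    Algebra.commutes r (algebraMap R A s)]
  abel

theorem Gamma_eq_self_of_mem_ccrSet (l : V →ₗ[ℂ] ℂ) (G : V →ₗ[ℂ] V →ₗ[ℂ] ℂ)
    {x : TensorAlgebra ℂ V} (hx : x ∈ ccrSet G) : Gamma l x = x := by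
  obtain ⟨v, w, rfl⟩ := hx
  simp only [map_sub, map_mul, Gamma_ι, AlgHom.commutes, commutator_sub_algebraMap]

theorem image_Gamma_ccrSet (l : V →ₗ[ℂ] ℂ) (G : V →ₗ[ℂ] V →ₗ[ℂ] ℂ) :
    Gamma l '' ccrSet G = ccrSet G :=
  Set.EqOn.image_eq_self fun _ hx ↦ Gamma_eq_self_of_mem_ccrSet l G hx

theorem image_Gamma_dynSet (l : V →ₗ[ℂ] ℂ) (D : V →ₗ[ℂ] V) :
    Gamma l '' dynSet D = srcSet D (l.comp D) := by
  ext x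
  simp [dynSet, srcSet, eq_comm]

theorem image_Gamma_generators (G : V →ₗ[ℂ] V →ₗ[ℂ] ℂ) (D : V →ₗ[ℂ] V) (l : V →ₗ[ℂ] ℂ) :
    Gamma l '' (dynSet D ∪ ccrSet G) = srcSet D (l.comp D) ∪ ccrSet G := by
  rw [Set.image_union, image_Gamma_dynSet, image_Gamma_ccrSet]

theorem relZero_onFun_Gamma_neg (G : V →ₗ[ℂ] V →ₗ[ℂ] ℂ) (D : V →ₗ[ℂ] V) (l : V →ₗ[ℂ] ℂ) :
    Function.onFun (relZero G D) (gammaEquiv l).symm = relMu G D (l.comp D) := by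
  ext a b
  rw [relMu, ← image_Gamma_generators G D l, ← coe_gammaEquiv, Function.onFun, relZero, ← map_sub]
  exact ⟨fun h ↦ ⟨_, h, (gammaEquiv l).apply_symm_apply _⟩,
    fun ⟨y, hy, hya⟩ ↦ by rwa [← hya, AlgEquiv.symm_apply_apply]⟩

/-- **The shift automorphism `Γ_λ` and the source ideals.**
With `μ := λ ∘ D`: (i) `Γ_λ` is an algebra automorphism with inverse `Γ_{-λ}`;
(ii) `Γ_λ` maps the two-sided ideal `I₀` (generated by `{ι (D v)}` and the CCR elements)
onto the two-sided ideal `I_μ` (generated by `{ι (D v) - μ(v)·1}` and the CCR elements);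
(iii) consequently `Γ_λ` descends to an algebra isomorphism `T(V)/I₀ ≃ T(V)/I_μ`. -/
theorem gamma_automorphism_maps_ideal_and_descends
    (G : V →ₗ[ℂ] V →ₗ[ℂ] ℂ) (D : V →ₗ[ℂ] V) (l : V →ₗ[ℂ] ℂ)
    (μ : V →ₗ[ℂ] ℂ) (hμ : μ = l.comp D) :
    (Function.Bijective (Gamma l) ∧
      (∀ x : TensorAlgebra ℂ V, Gamma (-l) (Gamma l x) = x ∧ Gamma l (Gamma (-l) x) = x)) ∧
    ⇑(Gamma l) '' (TwoSidedIdeal.span (dynSet D ∪ ccrSet G) : Set (TensorAlgebra ℂ V))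
      = (TwoSidedIdeal.span (srcSet D μ ∪ ccrSet G) : Set (TensorAlgebra ℂ V)) ∧
    ∃ e : RingQuot (relZero G D) ≃ₐ[ℂ] RingQuot (relMu G D μ),
      ∀ x : TensorAlgebra ℂ V,
        e (RingQuot.mkAlgHom ℂ (relZero G D) x)
          = RingQuot.mkAlgHom ℂ (relMu G D μ) (Gamma l x) := by
  subst hμ
  refine ⟨⟨(gammaEquiv l).bijective, fun x ↦ ⟨(gammaEquiv l).symm_apply_apply x,
    (gammaEquiv l).apply_symm_apply x⟩⟩, ?_, ?_⟩
  · rw [← coe_gammaEquiv, ← AlgEquiv.coe_ringEquiv,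
      TwoSidedIdeal.image_span_of_ringEquiv, AlgEquiv.coe_ringEquiv, coe_gammaEquiv,
      image_Gamma_generators]
  · rw [← relZero_onFun_Gamma_neg]
    exact ⟨RingQuot.algEquivQuotAlgEquiv (gammaEquiv l) (relZero G D), fun x ↦
      RingQuot.liftAlgHom_mkAlgHom_apply _ _ _ _⟩
end
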